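/- Over dense time ℝ≥0, for a non-Berkeley behavior b (for δ): the dense-time clock constraint formula Ξ(c ≥ k) := (UpToNowStrict(r_c) ∧ BoxPast_{(0,k)}(r_c)) ∨ (UpToNowStrict(¬r_c) ∧ BoxPast_{(0,k)}(¬r_c)) evaluated at a transition point t is equivalent to the variant (UpToNowStrict(r_c) ∧ BoxPast_{[δ,k)}(r_c)) ∨ (UpToNowStrict(¬r_c) ∧ BoxPast_{[δ,k)}(¬r_c)), provided k ≥ δ. -/
import Mathlib


def ConstOn {S : Type*} (b : ℝ → S) (I : Set ℝ) : Prop :=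
  ∀ x ∈ I, ∀ y ∈ I, b x = b y

def NonBerkeley {S : Type*} (b : ℝ → S) (δ : ℝ) : Prop :=
  ∀ t : ℝ, 0 ≤ t → ∃ u : ℝ, 0 ≤ u ∧ t ∈ Set.Icc u (u + δ) ∧ ConstOn b (Set.Icc u (u + δ))

def IsTransition {S : Type*} (b : ℝ → S) (t : ℝ) : Prop :=
  ∀ ε > (0 : ℝ), ∃ x ∈ Set.Ioo (t - ε) (t + ε), ∃ y ∈ Set.Ioo (t - ε) (t + ε),
    0 ≤ x ∧ 0 ≤ y ∧ b x ≠ b y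

def UpToNowStrict (b : ℝ → Bool) (p : Bool → Prop) (t : ℝ) : Prop :=
  ∃ ε > (0 : ℝ), ∀ x ∈ Set.Ioo (t - ε) t, p (b x)

/-- `BoxPast_I(p)` at `t`: `p` holds at `t - d` for every `d ∈ I` with `t - d` in the domain. -/
def BoxPastOn (b : ℝ → Bool) (p : Bool → Prop) (t : ℝ) (I : Set ℝ) : Prop :=
  ∀ d ∈ I, 0 ≤ t - d → p (b (t - d))

/-- If `b` is constant on `[u, u+δ]` with `u < t < u+δ` and `0 ≤ u`, then `t` is not a
transition point. -/
lemma not_transition_of_interior (b : ℝ → Bool) (δ t u : ℝ) (hu0 : 0 ≤ u)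
    (h1 : u < t) (h2 : t < u + δ) (hc : ConstOn b (Set.Icc u (u + δ))) :
    ¬ IsTransition b t := by
  intro htr
  obtain ⟨x, hx, y, hy, _, _, hne⟩ := htr (min (t - u) (u + δ - t))
    (lt_min (by linarith) (by linarith))
  have hxm : x ∈ Set.Icc u (u + δ) := by
    constructor
    · have := hx.1; have := min_le_left (t - u) (u + δ - t); linarith
    · have := hx.2; have := min_le_right (t - u) (u + δ - t); linarith
  have hym : y ∈ Set.Icc u (u + δ) := by
    constructor
    · have := hy.1; have := min_le_left (t - u) (u + δ - t); linarith
    · have := hy.2; have := min_le_right (t - u) (u + δ - t); linarith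
  exact hne (hc x hxm y hym)

/-- At a transition point `t ≥ δ` of a `δ`-non-Berkeley behavior, `b` is constant on
`(t - δ, t)`. -/
lemma const_before (b : ℝ → Bool) (δ : ℝ) (hδ : 0 < δ) (hB : NonBerkeley b δ)
    (t : ℝ) (ht : δ ≤ t) (htr : IsTransition b t) :
    ConstOn b (Set.Ioo (t - δ) t) := by
  intro x hx y hy
  by_contra hne
  wlog hxy : x ≤ y generalizing x y
  · exact this y hy x hx (Ne.symm hne) (le_of_not_ge hxy)
  obtain ⟨u, hu0, ⟨huy, hyu⟩, hconst⟩ := hB y (by have := hy.1; linarith)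
  rcases le_or_gt u x with hux | hux
  · exact hne (hconst x ⟨hux, hxy.trans hyu⟩ y ⟨huy, hyu⟩)
  · -- then u > x > t - δ, so u + δ > t, while u ≤ y < t: t interior
    have h1 : u < t := lt_of_le_of_lt huy hy.2
    have h2 : t < u + δ := by have := hx.1; linarith
    exact not_transition_of_interior b δ t u hu0 h1 h2 hconst htr

lemma boxpast_extend (b : ℝ → Bool) (δ k : ℝ) (hδ : 0 < δ) (hδk : δ ≤ k)
    (hB : NonBerkeley b δ) (t : ℝ) (ht : k ≤ t) (htr : IsTransition b t)
    (p : Bool → Prop)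
    (h1 : UpToNowStrict b p t) (h2 : BoxPastOn b p t (Set.Ico δ k)) :
    BoxPastOn b p t (Set.Ioo 0 k) := by
  obtain ⟨ε, hε, hεp⟩ := h1
  have hconst := const_before b δ hδ hB t (hδk.trans ht) htr
  intro d hd hd0
  rcases le_or_gt δ d with h | h
  · exact h2 d ⟨h, hd.2⟩ hd0
  · have hm : 0 < min ε δ := lt_min hε hδ
    have hm1 : min ε δ ≤ ε := min_le_left _ _
    have hm2 : min ε δ ≤ δ := min_le_right _ _
    have hweq : b (t - d) = b (t - min ε δ / 2) := by
      refine hconst (t - d) ⟨by linarith, by have := hd.1; linarith⟩ (t - min ε δ / 2)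
        ⟨by linarith, by linarith⟩
    rw [hweq]
    exact hεp (t - min ε δ / 2) ⟨by linarith, by linarith⟩

/-- At a transition point `t ≥ k` of a behavior non-Berkeley for `δ` (with `0 < δ ≤ k`),
the clock constraint formula `Ξ(c ≥ k)` using `BoxPast_{(0,k)}` is equivalent to its
variant using `BoxPast_{[δ,k)}`. -/
theorem clock_constraint_variants (b : ℝ → Bool) (δ k : ℝ) (hδ : 0 < δ) (hδk : δ ≤ k)
    (hB : NonBerkeley b δ) (t : ℝ) (ht : k ≤ t) (htr : IsTransition b t) :
    ((UpToNowStrict b (fun v => v = true) t ∧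
        BoxPastOn b (fun v => v = true) t (Set.Ioo 0 k)) ∨
     (UpToNowStrict b (fun v => v = false) t ∧
        BoxPastOn b (fun v => v = false) t (Set.Ioo 0 k))) ↔
    ((UpToNowStrict b (fun v => v = true) t ∧
        BoxPastOn b (fun v => v = true) t (Set.Ico δ k)) ∨
     (UpToNowStrict b (fun v => v = false) t ∧
        BoxPastOn b (fun v => v = false) t (Set.Ico δ k))) := by
  constructor
  · rintro (⟨h1, h2⟩ | ⟨h1, h2⟩)
    · exact Or.inl ⟨h1, fun d hd hd0 => h2 d ⟨hδ.trans_le hd.1, hd.2⟩ hd0⟩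
    · exact Or.inr ⟨h1, fun d hd hd0 => h2 d ⟨hδ.trans_le hd.1, hd.2⟩ hd0⟩
  · rintro (⟨h1, h2⟩ | ⟨h1, h2⟩)
    · exact Or.inl ⟨h1, boxpast_extend b δ k hδ hδk hB t ht htr _ h1 h2⟩
    · exact Or.inr ⟨h1, boxpast_extend b δ k hδ hδk hB t ht htr _ h1 h2⟩
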